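/- Let u_T : ℝⁿ → ℝ be Lipschitz with I_T(u_T) nonempty, and set ũ0 := S_T^- u_T. Then for every Lipschitz function u0 : ℝⁿ → ℝ, the following are equivalent: (1) S_T^+ u0 = u_T; (2) u0(x) ≥ ũ0(x) for all x ∈ ℝⁿ, and u0(x) = ũ0(x) for all x ∈ X_T(u_T). -/

import Mathlib

/-!
Every `u₀` satisfies `S_T^- S_T^+ u₀ ≤ u₀`, and `u₀ ≥ S_T^- u_T` gives `S_T^+ u₀ ≥ u_T`; both
come straight from the definitions. The rest is a calibration along characteristics. If
`u_T = S_T^+ v₀` has gradient `p` at `z` and `y` minimises the Hopf–Lax formula at `z`, then `p`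
is a subgradient of the convex function `L` at `(z - y)/T`, which forces `(z - y)/T = ∇H(p)`.
Hence `y = z - T ∇H(p)` and `v₀(y) = S_T^- u_T(y) = u_T(z) - T L(∇H(p))` for every `v₀` reaching
`u_T`. This is the equality on `X_T(u_T)`; conversely it yields `S_T^+ u₀ ≤ u_T` at the points
where `u_T` is differentiable, which are dense by Rademacher's theorem.
-/

open scoped RealInnerProductSpace
open Filter

noncomputable section

/-- `n`-dimensional Euclidean space. -/
abbrev Euc (n : ℕ) := EuclideanSpace ℝ (Fin n)

/-- A real-valued function on `ℝⁿ` is Lipschitz (with some constant). -/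
def IsLip {n : ℕ} (f : Euc n → ℝ) : Prop := ∃ K : NNReal, LipschitzWith K f

/-- The Legendre transform `L(q) = sup_p (⟨q,p⟫ - H(p))`. -/
def legendre {n : ℕ} (H : Euc n → ℝ) (q : Euc n) : ℝ :=
  ⨆ p : Euc n, (⟪q, p⟫ - H p)

/-- The forward Hopf–Lax operator `(S_T^+ g)(x) = inf_y [g(y) + T·L((x-y)/T)]`. -/
def Splus {n : ℕ} (T : ℝ) (L : Euc n → ℝ) (g : Euc n → ℝ) (x : Euc n) : ℝ :=
  ⨅ y : Euc n, (g y + T * L (T⁻¹ • (x - y)))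

/-- The backward operator `(S_T^- g)(x) = sup_y [g(y) - T·L((y-x)/T)]`. -/
def Sminus {n : ℕ} (T : ℝ) (L : Euc n → ℝ) (g : Euc n → ℝ) (x : Euc n) : ℝ :=
  ⨆ y : Euc n, (g y - T * L (T⁻¹ • (y - x)))

/-- The Hessian of `H` is positive definite at every point. -/
def PosDefHessian {n : ℕ} (H : Euc n → ℝ) : Prop :=
  ∀ p v : Euc n, v ≠ 0 → 0 < iteratedFDeriv ℝ 2 H p ![v, v]

/-- `H` is superlinear: `H(p)/‖p‖ → +∞` as `‖p‖ → +∞`. -/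
def Superlinear {n : ℕ} (H : Euc n → ℝ) : Prop :=
  Tendsto (fun p : Euc n => H p / ‖p‖) (cocompact (Euc n)) atTop

/-- The set `X_T(u_T) = { z - T·∇H(∇u_T(z)) : u_T differentiable at z }`. -/
def XT {n : ℕ} (T : ℝ) (H : Euc n → ℝ) (uT : Euc n → ℝ) : Set (Euc n) :=
  {x | ∃ z : Euc n, DifferentiableAt ℝ uT z ∧ x = z - T • gradient H (gradient uT z)}

open Set Topology MeasureTheory

section Convexity

variable {E : Type*} [NormedAddCommGroup E] [NormedSpace ℝ E]

lemma convexOn_univ_of_iteratedFDeriv_two_nonneg {f : E → ℝ} (hf : ContDiff ℝ 2 f)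
    (hf2 : ∀ p v, 0 ≤ iteratedFDeriv ℝ 2 f p ![v, v]) : ConvexOn ℝ univ f := by
  have hfd : Differentiable ℝ f := hf.differentiable (by norm_num)
  have hf'd : Differentiable ℝ (fderiv ℝ f) :=
    (hf.fderiv_right (m := 1) le_rfl).differentiable one_ne_zero
  refine ⟨convex_univ, fun x _ y _ a b ha hb hab => ?_⟩
  set c : ℝ → E := fun t => x + t • (y - x)
  have hc : ∀ t, HasDerivAt c (y - x) t := fun t => by
    simpa [c] using ((hasDerivAt_id t).smul_const (y - x)).const_add x
  have hφ : ∀ t, HasDerivAt (f ∘ c) (fderiv ℝ f (c t) (y - x)) t := fun t =>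
    (hfd (c t)).hasFDerivAt.comp_hasDerivAt t (hc t)
  have hφ' : ∀ t, HasDerivAt (fun s => fderiv ℝ f (c s) (y - x))
      (iteratedFDeriv ℝ 2 f (c t) ![y - x, y - x]) t := fun t => by
    simpa [iteratedFDeriv_two_apply] using
      ((hf'd (c t)).hasFDerivAt.comp_hasDerivAt t (hc t)).clm_apply (hasDerivAt_const t (y - x))
  have hmono : Monotone (deriv (f ∘ c)) := by
    rw [funext fun t => (hφ t).deriv]
    exact monotone_of_deriv_nonneg (fun t => (hφ' t).differentiableAt)
      fun t => (hφ' t).deriv ▸ hf2 _ _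
  have hφb := (hmono.convexOn_univ_of_deriv fun t => (hφ t).differentiableAt).2
    (mem_univ 0) (mem_univ 1) ha hb hab
  obtain rfl : a = 1 - b := by linarith
  have hcb : (1 - b) • x + b • y = c b := by simp only [c]; module
  simpa [hcb, c] using hφb

end Convexity

section Subgradient

variable {F : Type*} [NormedAddCommGroup F] [InnerProductSpace ℝ F] [CompleteSpace F]

lemma HasGradientAt.inner_le_of_sub_le_convexOn {f g : F → ℝ} {p x y : F}
    (hf : HasGradientAt f p x) (hg : ConvexOn ℝ univ g)
    (hfg : ∀ v, f (x + v) - f x ≤ g (y + v) - g y) (v : F) :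
    ⟪p, v⟫ ≤ g (y + v) - g y := by
  set φ : ℝ → ℝ := fun t => f (x + t • v)
  set ψ : ℝ → ℝ := fun t => g (y + t • v)
  have hφ : HasDerivAt φ ⟪p, v⟫ 0 := by
    have hline : HasDerivAt (fun t : ℝ => x + t • v) v 0 := by
      simpa using ((hasDerivAt_id (0 : ℝ)).smul_const v).const_add x
    exact hf.hasFDerivAt.comp_hasDerivAt_of_eq (0 : ℝ) hline (by simp)
  have hψ : ConvexOn ℝ univ ψ := by
    simpa [ψ, Function.comp_def, AffineMap.lineMap_apply_module', add_comm] using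
      hg.comp_affineMap (AffineMap.lineMap (k := ℝ) y (y + v))
  have hslope : ∀ t ∈ Ioo (0 : ℝ) 1, slope φ 0 t ≤ ψ 1 - ψ 0 := fun t ht =>
    calc slope φ 0 t = (φ t - φ 0) / (t - 0) := by rw [slope_def_field]
      _ ≤ (ψ t - ψ 0) / (t - 0) := by
        refine div_le_div_of_nonneg_right ?_ (by linarith [ht.1])
        simpa [φ, ψ] using hfg (t • v)
      _ ≤ (ψ 1 - ψ 0) / (1 - 0) :=
        hψ.secant_mono trivial trivial trivial ht.1.ne' one_ne_zero ht.2.le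
      _ = ψ 1 - ψ 0 := by simp
  have hlim : Tendsto (slope φ 0) (𝓝[>] 0) (𝓝 ⟪p, v⟫) :=
    (hasDerivWithinAt_iff_tendsto_slope' self_notMem_Ioi).mp hφ.hasDerivWithinAt
  simpa [ψ] using le_of_tendsto hlim (mem_of_superset (Ioo_mem_nhdsGT one_pos) hslope)

end Subgradient

variable {n : ℕ}

def GrowsSuperlinearly (f : Euc n → ℝ) : Prop :=
  ∀ M : ℝ, ∃ C : ℝ, ∀ p, M * ‖p‖ - C ≤ f p

section Legendre

variable {H : Euc n → ℝ}

lemma Superlinear.growsSuperlinearly (hs : Superlinear H) (hHc : Continuous H) :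
    GrowsSuperlinearly H := by
  intro M
  set f : Euc n → ℝ := fun p => M * ‖p‖ - H p
  have hev : ∀ᶠ p in cocompact (Euc n), f p ≤ 0 := by
    filter_upwards [hs.eventually_ge_atTop M,
      tendsto_norm_cocompact_atTop.eventually_gt_atTop 0] with p hp hp0
    rw [le_div_iff₀ hp0] at hp
    simp only [f]
    linarith
  obtain ⟨K, hK, hKf⟩ := mem_cocompact.mp hev
  obtain ⟨C, hC⟩ := hK.exists_bound_of_continuousOn (f := f) (by fun_prop)
  refine ⟨max C 0, fun p => ?_⟩
  have hfp : f p ≤ max C 0 := by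
    by_cases hp : p ∈ K
    · exact ((Real.le_norm_self _).trans (hC p hp)).trans (le_max_left _ _)
    · exact (hKf hp).trans (le_max_right _ _)
  simp only [f] at hfp
  linarith

lemma GrowsSuperlinearly.inner_sub_le_legendre (hH : GrowsSuperlinearly H) (q p : Euc n) :
    ⟪q, p⟫ - H p ≤ legendre H q := by
  obtain ⟨C, hC⟩ := hH ‖q‖
  refine le_ciSup (f := fun p => ⟪q, p⟫ - H p) ⟨C, ?_⟩ p
  rintro _ ⟨p', rfl⟩
  show ⟪q, p'⟫ - H p' ≤ C
  linarith [hC p', real_inner_le_norm q p']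

lemma growsSuperlinearly_legendre (hH : GrowsSuperlinearly H) (hHc : Continuous H) :
    GrowsSuperlinearly (legendre H) := by
  intro M
  obtain ⟨C, hC⟩ := (isCompact_closedBall (0 : Euc n) |M|).exists_bound_of_continuousOn
    hHc.continuousOn
  refine ⟨C, fun q => ?_⟩
  set p : Euc n := (M / ‖q‖) • q
  have hp : ‖p‖ ≤ |M| := by
    rcases eq_or_ne q 0 with rfl | hq
    · simp [p]
    · rw [norm_smul, Real.norm_eq_abs, abs_div, abs_norm,
        div_mul_cancel₀ _ (norm_ne_zero_iff.mpr hq)]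
  have hqp : ⟪q, p⟫ = M * ‖q‖ := by
    rcases eq_or_ne q 0 with rfl | hq
    · simp
    · rw [real_inner_smul_right, real_inner_self_eq_norm_sq]
      field_simp
  have hHp : H p ≤ C := (Real.le_norm_self _).trans (hC p (by simpa using hp))
  linarith [hH.inner_sub_le_legendre q p]

lemma GrowsSuperlinearly.convexOn_legendre (hH : GrowsSuperlinearly H) :
    ConvexOn ℝ univ (legendre H) := by
  refine ⟨convex_univ, fun q₁ _ q₂ _ a b ha hb hab => ciSup_le fun p => ?_⟩
  have h₁ := mul_le_mul_of_nonneg_left (hH.inner_sub_le_legendre q₁ p) ha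
  have h₂ := mul_le_mul_of_nonneg_left (hH.inner_sub_le_legendre q₂ p) hb
  simp only [inner_add_left, real_inner_smul_left, smul_eq_mul]
  have : H p = a * H p + b * H p := by rw [← add_mul, hab, one_mul]
  linarith

lemma GrowsSuperlinearly.continuous_legendre (hH : GrowsSuperlinearly H) :
    Continuous (legendre H) :=
  continuousOn_univ.mp (hH.convexOn_legendre.continuousOn isOpen_univ)

lemma legendre_gradient (hHd : Differentiable ℝ H) (hHcvx : ConvexOn ℝ univ H)
    (hH : GrowsSuperlinearly H) (p : Euc n) :
    legendre H (gradient H p) = ⟪gradient H p, p⟫ - H p := by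
  refine le_antisymm (ciSup_le fun p' => ?_) (hH.inner_sub_le_legendre _ p)
  have := (hHd p).hasGradientAt.inner_le_of_sub_le_convexOn hHcvx (fun _ => le_rfl) (p' - p)
  rw [add_sub_cancel, inner_sub_right] at this
  linarith

lemma gradient_eq_of_subgradient_legendre (hHd : Differentiable ℝ H)
    (hHcvx : ConvexOn ℝ univ H) (hH : GrowsSuperlinearly H) {q p : Euc n}
    (hsub : ∀ h, legendre H q + ⟪p, h⟫ ≤ legendre H (q + h)) : gradient H p = q := by
  have hmax : IsMaxOn (fun p' => ⟪q, p'⟫ - H p') univ p := by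
    intro p' _
    have h₁ := hsub (gradient H p - q)
    rw [add_sub_cancel, legendre_gradient hHd hHcvx hH, inner_sub_right] at h₁
    show ⟪q, p'⟫ - H p' ≤ ⟪q, p⟫ - H p
    linarith [hH.inner_sub_le_legendre q p', real_inner_comm p q,
      real_inner_comm p (gradient H p)]
  have hzero := (hmax.isLocalMax univ_mem).hasFDerivAt_eq_zero
    ((innerSL ℝ q).hasFDerivAt.sub (hHd p).hasFDerivAt)
  refine ext_inner_right ℝ fun v => ?_
  have hv := congrArg (· v) hzero
  simp only [sub_apply, innerSL_apply_apply, zero_apply, sub_eq_zero] at hv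
  rw [hv, gradient, InnerProductSpace.toDual_symm_apply]

end Legendre

section HopfLax

variable {T : ℝ} {L g : Euc n → ℝ} {K : NNReal}

lemma GrowsSuperlinearly.rescale (hL : GrowsSuperlinearly L) (hT : 0 < T) :
    GrowsSuperlinearly fun v => T * L (T⁻¹ • v) := by
  intro M
  obtain ⟨C, hC⟩ := hL M
  refine ⟨T * C, fun v => ?_⟩
  have h := mul_le_mul_of_nonneg_left (hC (T⁻¹ • v)) hT.le
  rw [norm_smul, Real.norm_of_nonneg (inv_nonneg.mpr hT.le)] at h
  have : T * (M * (T⁻¹ * ‖v‖)) = M * ‖v‖ := by field_simp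
  linarith

lemma GrowsSuperlinearly.exists_add_norm_sub_le (hL : GrowsSuperlinearly L)
    (hg : LipschitzWith K g) : ∃ C, ∀ x y, g x + ‖x - y‖ - C ≤ g y + L (x - y) := by
  obtain ⟨C, hC⟩ := hL (K + 1)
  refine ⟨C, fun x y => ?_⟩
  have := hg.le_add_mul x y
  rw [dist_eq_norm] at this
  linarith [hC (x - y)]

lemma splus_le (hT : 0 < T) (hL : GrowsSuperlinearly L) (hg : LipschitzWith K g)
    (x y : Euc n) : Splus T L g x ≤ g y + T * L (T⁻¹ • (x - y)) := by
  obtain ⟨C, hC⟩ := (hL.rescale hT).exists_add_norm_sub_le hg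
  refine ciInf_le ⟨g x - C, ?_⟩ y
  rintro _ ⟨y', rfl⟩
  linarith [hC x y', norm_nonneg (x - y')]

lemma le_sminus (hT : 0 < T) (hL : GrowsSuperlinearly L) (hg : LipschitzWith K g)
    (x y : Euc n) : g y - T * L (T⁻¹ • (y - x)) ≤ Sminus T L g x := by
  obtain ⟨C, hC⟩ := (hL.rescale hT).exists_add_norm_sub_le hg
  refine le_ciSup (f := fun y => g y - T * L (T⁻¹ • (y - x))) ⟨g x + C, ?_⟩ y
  rintro _ ⟨y', rfl⟩
  linarith [hC y' x, norm_nonneg (y' - x)]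

lemma exists_splus_eq (hT : 0 < T) (hLc : Continuous L) (hL : GrowsSuperlinearly L)
    (hg : LipschitzWith K g) (x : Euc n) :
    ∃ y, Splus T L g x = g y + T * L (T⁻¹ • (x - y)) := by
  obtain ⟨C, hC⟩ := (hL.rescale hT).exists_add_norm_sub_le hg
  have hcont : Continuous fun y => g y + T * L (T⁻¹ • (x - y)) := by
    have := hg.continuous
    fun_prop
  have hcoercive : Tendsto (fun y => g y + T * L (T⁻¹ • (x - y))) (cocompact _) atTop := by
    refine tendsto_atTop_mono (fun y => ?_)
      (tendsto_atTop_add_const_right _ (g x - ‖x‖ - C) tendsto_norm_cocompact_atTop)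
    have h₁ := hC x y
    have h₂ := norm_sub_norm_le y x
    rw [norm_sub_rev] at h₂
    linarith
  obtain ⟨y, hy⟩ := hcont.exists_forall_le hcoercive
  exact ⟨y, le_antisymm (splus_le hT hL hg x y) (le_ciInf hy)⟩

lemma lipschitzWith_splus (hT : 0 < T) (hL : GrowsSuperlinearly L) (hg : LipschitzWith K g) :
    LipschitzWith K (Splus T L g) := by
  refine LipschitzWith.of_le_add_mul K fun x x' => ?_
  rw [dist_eq_norm, ← sub_le_iff_le_add]
  refine le_ciInf fun y => ?_
  have h := splus_le hT hL hg x (y + (x - x'))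
  rw [show x - (y + (x - x')) = x' - y by abel] at h
  have := hg.le_add_mul (y + (x - x')) y
  rw [dist_eq_norm, add_sub_cancel_left] at this
  linarith

lemma sminus_splus_le (hT : 0 < T) (hL : GrowsSuperlinearly L) (hg : LipschitzWith K g)
    (x : Euc n) : Sminus T L (Splus T L g) x ≤ g x :=
  ciSup_le fun y => by linarith [splus_le hT hL hg y x]

lemma le_splus_of_sminus_le (hT : 0 < T) (hL : GrowsSuperlinearly L) (hg : LipschitzWith K g)
    {f : Euc n → ℝ} (hf : ∀ y, Sminus T L g y ≤ f y) (x : Euc n) : g x ≤ Splus T L f x :=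
  le_ciInf fun y => by linarith [le_sminus hT hL hg y x, hf y]

end HopfLax

section Characteristics

variable {H : Euc n → ℝ} {T : ℝ} {K K' : NNReal} {u₀ v₀ : Euc n → ℝ}

lemma splus_eq_of_hasGradientAt (hT : 0 < T) (hHd : Differentiable ℝ H)
    (hHcvx : ConvexOn ℝ univ H) (hH : GrowsSuperlinearly H) (hv₀ : LipschitzWith K v₀)
    {z p : Euc n} (hp : HasGradientAt (Splus T (legendre H) v₀) p z) :
    Splus T (legendre H) v₀ z = v₀ (z - T • gradient H p) + T * legendre H (gradient H p) := by
  have hL := growsSuperlinearly_legendre hH hHd.continuous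
  obtain ⟨y, hy⟩ := exists_splus_eq hT hH.continuous_legendre hL hv₀ z
  set q := T⁻¹ • (z - y)
  have hconvex : ConvexOn ℝ univ fun w => T * legendre H (T⁻¹ • w) := by
    have := (hH.convexOn_legendre.comp_linearMap
      ((T⁻¹ : ℝ) • (LinearMap.id : Euc n →ₗ[ℝ] Euc n))).smul hT.le
    simpa using this
  have hsub : ∀ h, legendre H q + ⟪p, h⟫ ≤ legendre H (q + h) := by
    intro h
    have hscaled := hp.inner_le_of_sub_le_convexOn hconvex (y := z - y) (fun v => by
      have := splus_le hT hL hv₀ (z + v) y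
      rw [show z + v - y = z - y + v by abel] at this
      linarith) (T • h)
    rw [smul_add, inv_smul_smul₀ hT.ne', real_inner_smul_right] at hscaled
    change T * ⟪p, h⟫ ≤ T * legendre H (q + h) - T * legendre H q at hscaled
    exact le_of_mul_le_mul_left (by linarith) hT
  rw [gradient_eq_of_subgradient_legendre hHd hHcvx hH hsub, smul_inv_smul₀ hT.ne',
    sub_sub_cancel]
  exact hy

lemma sminus_splus_sub_smul_gradient (hT : 0 < T) (hHd : Differentiable ℝ H)
    (hHcvx : ConvexOn ℝ univ H) (hH : GrowsSuperlinearly H) (hv₀ : LipschitzWith K v₀)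
    {z p : Euc n} (hp : HasGradientAt (Splus T (legendre H) v₀) p z) :
    Sminus T (legendre H) (Splus T (legendre H) v₀) (z - T • gradient H p) =
      Splus T (legendre H) v₀ z - T * legendre H (gradient H p) := by
  have hL := growsSuperlinearly_legendre hH hHd.continuous
  refine le_antisymm ?_ ?_
  · linarith [sminus_splus_le hT hL hv₀ (z - T • gradient H p),
      splus_eq_of_hasGradientAt hT hHd hHcvx hH hv₀ hp]
  · have := le_sminus hT hL (lipschitzWith_splus hT hL hv₀) (z - T • gradient H p) z
    rwa [sub_sub_cancel, inv_smul_smul₀ hT.ne'] at this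

lemma eq_sminus_splus_of_mem_XT (hT : 0 < T) (hHd : Differentiable ℝ H)
    (hHcvx : ConvexOn ℝ univ H) (hH : GrowsSuperlinearly H) (hu₀ : LipschitzWith K u₀)
    {x : Euc n} (hx : x ∈ XT T H (Splus T (legendre H) u₀)) :
    u₀ x = Sminus T (legendre H) (Splus T (legendre H) u₀) x := by
  obtain ⟨z, hz, rfl⟩ := hx
  linarith [splus_eq_of_hasGradientAt hT hHd hHcvx hH hu₀ hz.hasGradientAt,
    sminus_splus_sub_smul_gradient hT hHd hHcvx hH hu₀ hz.hasGradientAt]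

lemma splus_le_of_le_sminus_on_XT (hT : 0 < T) (hHd : Differentiable ℝ H)
    (hHcvx : ConvexOn ℝ univ H) (hH : GrowsSuperlinearly H) (hv₀ : LipschitzWith K v₀)
    (hu₀ : LipschitzWith K' u₀)
    (h : ∀ x ∈ XT T H (Splus T (legendre H) v₀),
      u₀ x ≤ Sminus T (legendre H) (Splus T (legendre H) v₀) x) :
    Splus T (legendre H) u₀ ≤ Splus T (legendre H) v₀ := by
  have hL := growsSuperlinearly_legendre hH hHd.continuous
  have hv₀' := lipschitzWith_splus hT hL hv₀
  have hdiff : {z | DifferentiableAt ℝ (Splus T (legendre H) v₀) z} ⊆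
      {z | Splus T (legendre H) u₀ z ≤ Splus T (legendre H) v₀ z} := by
    intro z hz
    show Splus T (legendre H) u₀ z ≤ Splus T (legendre H) v₀ z
    set y := z - T • gradient H (gradient (Splus T (legendre H) v₀) z)
    have hu₀y := splus_le hT hL hu₀ z y
    rw [sub_sub_cancel, inv_smul_smul₀ hT.ne'] at hu₀y
    linarith [h y ⟨z, hz, rfl⟩,
      sminus_splus_sub_smul_gradient hT hHd hHcvx hH hv₀ hz.hasGradientAt]
  have hclosed := isClosed_le (lipschitzWith_splus hT hL hu₀).continuous hv₀'.continuous
  exact fun x => hclosed.closure_subset_iff.mpr hdiff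
    (Measure.dense_of_ae (μ := volume) hv₀'.ae_differentiableAt x)

end Characteristics

lemma PosDefHessian.iteratedFDeriv_two_nonneg {H : Euc n → ℝ} (hH : PosDefHessian H)
    (p v : Euc n) : 0 ≤ iteratedFDeriv ℝ 2 H p ![v, v] := by
  rcases eq_or_ne v 0 with rfl | hv
  · exact (ContinuousMultilinearMap.map_coord_zero _ (0 : Fin 2) rfl).ge
  · exact (hH p v hv).le

theorem initial_data_characterization
    {n : ℕ} (T : ℝ) (hT : 0 < T)
    (H : Euc n → ℝ) (hH : ContDiff ℝ 2 H)
    (hHconv : PosDefHessian H) (hHsuper : Superlinear H)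
    (uT : Euc n → ℝ)
    (hreach : ∃ u0 : Euc n → ℝ, IsLip u0 ∧ Splus T (legendre H) u0 = uT)
    (u0 : Euc n → ℝ) (hu0 : IsLip u0) :
    Splus T (legendre H) u0 = uT ↔
      ((∀ x : Euc n, Sminus T (legendre H) uT x ≤ u0 x) ∧
        ∀ x ∈ XT T H uT, u0 x = Sminus T (legendre H) uT x) := by
  have hHd : Differentiable ℝ H := hH.differentiable (by norm_num)
  have hHcvx := convexOn_univ_of_iteratedFDeriv_two_nonneg hH hHconv.iteratedFDeriv_two_nonneg
  have hHg := hHsuper.growsSuperlinearly hHd.continuous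
  have hL := growsSuperlinearly_legendre hHg hHd.continuous
  obtain ⟨K₀, hu₀⟩ := hu0
  constructor
  · rintro rfl
    exact ⟨sminus_splus_le hT hL hu₀, fun x hx => eq_sminus_splus_of_mem_XT hT hHd hHcvx hHg hu₀ hx⟩
  · rintro ⟨hle, heq⟩
    obtain ⟨v₀, ⟨Kv, hv₀⟩, rfl⟩ := hreach
    exact le_antisymm
      (splus_le_of_le_sminus_on_XT hT hHd hHcvx hHg hv₀ hu₀ fun x hx => (heq x hx).le)
      (le_splus_of_sminus_le hT hL (lipschitzWith_splus hT hL hv₀) hle)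

end
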